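/- Let s > 1 be real. Then the limit as u → 1⁻ of [(2/u)((1-u)/(1+u))^s ∫₀^{u²} ((1-t)/(1+t))^s (1-t²)^{-5} dt] / [(1-u)^{2s-4}/(2^{s+8}(4-s))] equals 1, provided 1 < s < 3/2. -/

import Mathlib

/-!
Writing `((1-t)/(1+t))^s (1-t²)^(-5) = (1-t)^(s-5) g(t)` with `g(t) = (1+t)^(-(s+5))` smooth
on `[0,1]`, replacing `g(t)` by `g(1) = 2^(-(s+5))` changes the integral `∫₀^x` by at most
`K ∫₀^x (1-t)^(s-4)` (`K` a Lipschitz constant of `g`), which is `o((1-x)^(s-4))`, while the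
main term integrates to `g(1) ((1-x)^(s-4) - 1)/(4-s)`. Hence
`(1-x)^(4-s) ∫₀^x … → 2^(-(s+5))/(4-s)`, and the theorem follows by substituting `x = u²` and
`((1-u)/(1+u))^s = (1+u)^(-4) (1-u²)^(4-s) (1-u)^(2s-4)`.
-/

open Filter Set Topology Real MeasureTheory
open scoped NNReal

lemma integral_one_sub_rpow {x p : ℝ} (hx : x < 1) (hp : p ≠ -1) :
    ∫ t in (0 : ℝ)..x, (1 - t) ^ p = (1 - (1 - x) ^ (p + 1)) / (p + 1) := by
  have h0 : (0 : ℝ) ∉ uIcc (1 - x) (1 - 0) := fun h => by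
    rcases mem_uIcc.1 h with h | h <;> linarith [h.1, h.2]
  rw [intervalIntegral.integral_comp_sub_left (fun t => t ^ p), integral_rpow (.inr ⟨hp, h0⟩),
    sub_zero, one_rpow]

lemma one_sub_rpow_mul_integral_one_sub_rpow {x p q : ℝ} (hx : x < 1) (hp : p ≠ -1) :
    (1 - x) ^ q * ∫ t in (0 : ℝ)..x, (1 - t) ^ p =
      ((1 - x) ^ q - (1 - x) ^ (q + (p + 1))) / (p + 1) := by
  rw [integral_one_sub_rpow hx hp, rpow_add (x := 1 - x) (by linarith) q (p + 1)]
  ring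

lemma tendsto_one_sub_rpow_nhdsLT_one {a : ℝ} (ha : 0 < a) :
    Tendsto (fun x : ℝ => (1 - x) ^ a) (𝓝[<] 1) (𝓝 0) := by
  have h : ContinuousAt (fun x : ℝ => (1 - x) ^ a) 1 :=
    (continuousAt_const.sub continuousAt_id).rpow_const (.inr ha.le)
  simpa [zero_rpow ha.ne'] using h.tendsto.mono_left nhdsWithin_le_nhds

lemma abs_integral_one_sub_rpow_mul_sub_le {x p : ℝ} {K : ℝ≥0} {g : ℝ → ℝ}
    (hx : x ∈ Ico 0 1) (hg : LipschitzOnWith K g (Icc 0 1)) :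
    |(∫ t in (0 : ℝ)..x, (1 - t) ^ p * g t) - g 1 * ∫ t in (0 : ℝ)..x, (1 - t) ^ p| ≤
      K * ∫ t in (0 : ℝ)..x, (1 - t) ^ (p + 1) := by
  have hsub : uIcc 0 x ⊆ Ico 0 1 := by
    rw [uIcc_of_le hx.1]; exact Icc_subset_Ico_right hx.2
  have hpow (r : ℝ) : ContinuousOn (fun t : ℝ => (1 - t) ^ r) (uIcc 0 x) :=
    ContinuousOn.rpow_const (by fun_prop) fun t ht => .inl (sub_pos.2 (hsub ht).2).ne'
  have hgc : ContinuousOn g (uIcc 0 x) := hg.continuousOn.mono (hsub.trans Ico_subset_Icc_self)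
  have hint : IntervalIntegrable (fun t => (1 - t) ^ p * g t) volume 0 x :=
    ((hpow p).mul hgc).intervalIntegrable
  have hint' : IntervalIntegrable (fun t => g 1 * (1 - t) ^ p) volume 0 x :=
    ((hpow p).const_smul (g 1)).intervalIntegrable
  rw [← intervalIntegral.integral_const_mul, ← intervalIntegral.integral_sub hint hint',
    ← intervalIntegral.integral_const_mul, ← Real.norm_eq_abs]
  refine intervalIntegral.norm_integral_le_of_norm_le hx.1 (ae_of_all _ fun t ht => ?_)
    ((hpow _).const_smul (K : ℝ)).intervalIntegrable
  have ht1 : 0 < 1 - t := by linarith [ht.2, hx.2]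
  have hlip : |g t - g 1| ≤ K * (1 - t) := by
    simpa [Real.dist_eq, abs_of_neg (by linarith : t - 1 < 0)] using
      hg.dist_le_mul t ⟨ht.1.le, by linarith⟩ 1 ⟨zero_le_one, le_rfl⟩
  calc ‖(1 - t) ^ p * g t - g 1 * (1 - t) ^ p‖ = (1 - t) ^ p * |g t - g 1| := by
        rw [show (1 - t) ^ p * g t - g 1 * (1 - t) ^ p = (1 - t) ^ p * (g t - g 1) by ring,
          Real.norm_eq_abs, abs_mul, abs_of_pos (rpow_pos_of_pos ht1 p)]
    _ ≤ (1 - t) ^ p * (K * (1 - t)) := by gcongr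
    _ = K * (1 - t) ^ (p + 1) := by rw [rpow_add_one ht1.ne']; ring

theorem tendsto_one_sub_rpow_mul_integral {q : ℝ} {K : ℝ≥0} {g : ℝ → ℝ} (hq : 0 < q)
    (hq1 : q ≠ 1) (hg : LipschitzOnWith K g (Icc 0 1)) :
    Tendsto (fun x => (1 - x) ^ q * ∫ t in (0 : ℝ)..x, (1 - t) ^ (-q - 1) * g t)
      (𝓝[<] 1) (𝓝 (g 1 / q)) := by
  have hmain : Tendsto (fun x => g 1 * ((1 - x) ^ q * ∫ t in (0 : ℝ)..x, (1 - t) ^ (-q - 1)))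
      (𝓝[<] 1) (𝓝 (g 1 / q)) := by
    have h := (((tendsto_one_sub_rpow_nhdsLT_one hq).sub_const 1).div_const (-q)).const_mul (g 1)
    rw [show g 1 * ((0 - 1) / -q) = g 1 / q by ring] at h
    refine h.congr' ?_
    filter_upwards [self_mem_nhdsWithin] with x (hx : x < 1)
    rw [one_sub_rpow_mul_integral_one_sub_rpow hx (by linarith)]
    simp
  have herr : Tendsto (fun x => K * ((1 - x) ^ q * ∫ t in (0 : ℝ)..x, (1 - t) ^ (-q)))
      (𝓝[<] 1) (𝓝 0) := by
    have h := ((((tendsto_one_sub_rpow_nhdsLT_one hq).sub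
      (tendsto_one_sub_rpow_nhdsLT_one one_pos)).div_const (-q + 1)).const_mul (K : ℝ))
    simp only [sub_zero, zero_div, mul_zero, rpow_one] at h
    refine h.congr' ?_
    filter_upwards [self_mem_nhdsWithin] with x (hx : x < 1)
    rw [one_sub_rpow_mul_integral_one_sub_rpow hx (fun h => hq1 (by linarith))]
    simp
  refine hmain.congr_dist (squeeze_zero' (Eventually.of_forall fun _ => dist_nonneg) ?_ herr)
  filter_upwards [Ioo_mem_nhdsLT one_pos] with x hx
  have hx1 : 0 < 1 - x := sub_pos.2 hx.2
  rw [dist_comm, Real.dist_eq, mul_left_comm (g 1), ← mul_sub, abs_mul,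
    abs_of_pos (rpow_pos_of_pos hx1 q), mul_left_comm]
  gcongr
  simpa using abs_integral_one_sub_rpow_mul_sub_le (p := -q - 1) (Ioo_subset_Ico_self hx) hg

lemma one_sub_div_one_add_rpow_mul_one_sub_sq_rpow {t s r : ℝ} (ht : t ∈ Ioo (-1) 1) :
    ((1 - t) / (1 + t)) ^ s * (1 - t ^ 2) ^ r = (1 - t) ^ (s + r) * (1 + t) ^ (r - s) := by
  have h1 : 0 < 1 - t := by linarith [ht.2]
  have h2 : 0 < 1 + t := by linarith [ht.1]
  rw [show 1 - t ^ 2 = (1 - t) * (1 + t) by ring, mul_rpow h1.le h2.le, div_rpow h1.le h2.le,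
    rpow_add h1, rpow_sub h2]
  ring

theorem tendsto_one_sub_rpow_mul_integral_of_lt_four {s : ℝ} (hs4 : s < 4) (hs3 : s ≠ 3) :
    Tendsto (fun x => (1 - x) ^ (4 - s) *
        ∫ t in (0 : ℝ)..x, ((1 - t) / (1 + t)) ^ s * (1 - t ^ 2) ^ (-(5 : ℝ)))
      (𝓝[<] 1) (𝓝 (2 ^ (-(s + 5)) / (4 - s))) := by
  obtain ⟨K, hK⟩ : ∃ K, LipschitzOnWith K (fun t : ℝ => (1 + t) ^ (-(s + 5))) (Icc 0 1) :=
    ContDiffOn.exists_lipschitzOnWith (n := 1)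
      ((contDiffOn_const.add contDiffOn_id).rpow_const_of_ne fun t ht => by simp; linarith [ht.1])
      one_ne_zero (convex_Icc 0 1) isCompact_Icc
  have h := tendsto_one_sub_rpow_mul_integral (q := 4 - s) (by linarith)
    (fun h => hs3 (by linarith)) hK
  simp only [one_add_one_eq_two] at h
  refine h.congr' ?_
  filter_upwards [Ioo_mem_nhdsLT one_pos] with x hx
  congr 1
  refine intervalIntegral.integral_congr fun t ht => ?_
  rw [uIcc_of_le hx.1.le] at ht
  rw [one_sub_div_one_add_rpow_mul_one_sub_sq_rpow
    ⟨by linarith [ht.1], by linarith [ht.2, hx.2]⟩]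
  congr 2 <;> ring

lemma tendsto_sq_nhdsLT_one : Tendsto (fun u : ℝ => u ^ 2) (𝓝[<] 1) (𝓝[<] 1) := by
  refine tendsto_nhdsWithin_iff.2 ⟨?_, ?_⟩
  · simpa using ((continuous_pow 2).tendsto (1 : ℝ)).mono_left nhdsWithin_le_nhds
  · filter_upwards [Ioo_mem_nhdsLT one_pos] with u hu
    exact pow_lt_one₀ hu.1.le hu.2 two_ne_zero

lemma one_sub_div_one_add_rpow_eq_mul {u s : ℝ} (hu : u ∈ Ioo (-1) 1) :
    ((1 - u) / (1 + u)) ^ s =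
      (1 + u) ^ (-4 : ℝ) * (1 - u ^ 2) ^ (4 - s) * (1 - u) ^ (2 * s - 4) := by
  have h1 : 0 < 1 - u := by linarith [hu.2]
  have h2 : 0 < 1 + u := by linarith [hu.1]
  rw [show 1 - u ^ 2 = (1 - u) * (1 + u) by ring]
  simp only [rpow_def_of_pos h1, rpow_def_of_pos h2, rpow_def_of_pos (div_pos h1 h2),
    rpow_def_of_pos (mul_pos h1 h2), log_div h1.ne' h2.ne', log_mul h1.ne' h2.ne', ← exp_add]
  ring_nf

theorem tendsto_ratio_F_deriv_bound_general
    (s : ℝ) (hs2 : s < 3 / 2) :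
    Filter.Tendsto
      (fun u : ℝ =>
        ((2 / u) * ((1 - u) / (1 + u)) ^ s *
            ∫ t in (0 : ℝ)..(u ^ 2), ((1 - t) / (1 + t)) ^ s * (1 - t ^ 2) ^ (-(5 : ℝ))) /
          ((1 - u) ^ (2 * s - 4) / ((2 : ℝ) ^ (s + 8) * (4 - s))))
      (nhdsWithin 1 (Set.Iio 1)) (nhds 1) := by
  have hF := (tendsto_one_sub_rpow_mul_integral_of_lt_four (by linarith)
    (by linarith : s ≠ 3)).comp tendsto_sq_nhdsLT_one
  have hpre : Tendsto (fun u : ℝ => 2 / u * (1 + u) ^ (-4 : ℝ)) (𝓝[<] 1)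
      (𝓝 (2 / 1 * (1 + 1) ^ (-4 : ℝ))) :=
    (ContinuousAt.tendsto (by fun_prop (disch := norm_num))).mono_left nhdsWithin_le_nhds
  have hval : 2 / 1 * (1 + 1) ^ (-4 : ℝ) * (2 ^ (s + 8) * (4 - s)) * (2 ^ (-(s + 5)) / (4 - s))
      = (1 : ℝ) := by
    rw [one_add_one_eq_two, show s + 8 = 3 + (s + 5) by ring, rpow_add two_pos,
      rpow_neg two_pos.le, rpow_neg two_pos.le]
    field_simp [(by linarith : 4 - s ≠ 0)]
    norm_num
  have hlim := (hpre.mul_const (2 ^ (s + 8) * (4 - s))).mul hF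
  rw [hval] at hlim
  refine hlim.congr' ?_
  filter_upwards [Ioo_mem_nhdsLT one_pos] with u hu
  rw [one_sub_div_one_add_rpow_eq_mul ⟨by linarith [hu.1], hu.2⟩]
  have : (1 - u) ^ (2 * s - 4) ≠ 0 := (rpow_pos_of_pos (sub_pos.2 hu.2) _).ne'
  simp only [Function.comp_apply]
  field_simp

theorem tendsto_ratio_F_deriv_bound
    (s : ℝ) (hs1 : 1 < s) (hs2 : s < 3 / 2) :
    Filter.Tendsto
      (fun u : ℝ =>
        ((2 / u) * ((1 - u) / (1 + u)) ^ s *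
            ∫ t in (0 : ℝ)..(u ^ 2), ((1 - t) / (1 + t)) ^ s * (1 - t ^ 2) ^ (-(5 : ℝ))) /
          ((1 - u) ^ (2 * s - 4) / ((2 : ℝ) ^ (s + 8) * (4 - s))))
      (nhdsWithin 1 (Set.Iio 1)) (nhds 1) :=
  tendsto_ratio_F_deriv_bound_general s hs2
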